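/- Let k ⊆ L be an extension of fields with k algebraically closed, and let A be a locally finite ℕ-graded k-algebra. Then A is a projectively simple k-algebra if and only if A ⊗_k L is a projectively simple L-algebra. -/

import Mathlib

/-!
STATEMENT 4: Let `k ⊆ L` be an extension of fields with `k` algebraically closed, and let
`A` be a locally finite ℕ-graded `k`-algebra.  Then `A` is a projectively simple
`k`-algebra iff `A ⊗_k L` (here realized as `L ⊗[k] A`, graded by `(Aₙ) ⊗ L`) is a
projectively simple `L`-algebra.

A two-sided ideal `I` of a graded algebra is graded (`I = ⊕ₙ (I ∩ Aₙ)`) iff it is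
spanned by its homogeneous elements; we use the latter formulation, which makes sense
for the base-changed grading as well.
-/

open scoped TensorProduct

/-- The underlying `F`-submodule of a two-sided ideal of an `F`-algebra. -/
def TwoSidedIdeal.ksub (F : Type*) {B : Type*} [CommSemiring F] [Ring B] [Algebra F B]
    (I : TwoSidedIdeal B) : Submodule F B where
  carrier := I
  add_mem' := fun ha hb => I.add_mem ha hb
  zero_mem' := I.zero_mem
  smul_mem' := fun c x hx => by
    rw [Algebra.smul_def]
    exact I.mul_mem_left _ _ hx

/-- A two-sided ideal of a graded algebra is *graded* iff it is spanned (as a submodule)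
by its homogeneous elements. -/
def IsGradedTwoSidedIdeal {F B : Type*} [CommSemiring F] [Ring B] [Algebra F B]
    (ℬ : ℕ → Submodule F B) (I : TwoSidedIdeal B) : Prop :=
  (I : Set B) ⊆ (Submodule.span F {x : B | x ∈ I ∧ ∃ n, x ∈ ℬ n} : Submodule F B)

/-- Projective simplicity of an ℕ-graded algebra over a field `F`:
it is infinite dimensional over `F` and every nonzero graded two-sided ideal has finite
codimension. -/
def ProjectivelySimple (F : Type*) {B : Type*} [Field F] [Ring B] [Algebra F B]
    (ℬ : ℕ → Submodule F B) : Prop :=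
  ¬ FiniteDimensional F B ∧
  ∀ I : TwoSidedIdeal B, I ≠ ⊥ → IsGradedTwoSidedIdeal ℬ I →
    FiniteDimensional F (B ⧸ I.ksub F)

/-!
Extending a graded ideal `I` of `A` to `L ⊗ I` and using `(L ⊗ A) ⧸ (L ⊗ I) ≃ L ⊗ (A ⧸ I)` gives
the descent of projective simplicity from `L ⊗ A` to `A`.

Conversely, let `J` be a nonzero graded ideal of `L ⊗ A`. It suffices to find `a ≠ 0` with
`1 ⊗ a ∈ J`: then the contraction of `J` to `A` is a nonzero graded ideal, of finite codimension,
and `L ⊗` it lies in `J`. Take a nonzero `∑ i < m, lᵢ ⊗ wᵢ ∈ J` of minimal length `m`, so that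
the `lᵢ` are linearly independent over `k`. If `m ≥ 2`, the first coefficients `w₀` of the elements
`∑ lᵢ ⊗ wᵢ ∈ J` form a nonzero graded ideal of `A`, which therefore contains a nonzero graded
piece `A_d`; by minimality `w₀ ∈ A_d` determines `w`, and `w₀ ↦ w₁` is an endomorphism of
`A_d`. As `k` is algebraically closed it has an eigenvector, giving an element of `J` with
`w₁ = μ w₀`, i.e. of length `m - 1`: a contradiction.
-/

namespace TwoSidedIdeal

variable {F B : Type*} [CommSemiring F] [Ring B] [Algebra F B]

@[simp]
theorem mem_ksub {I : TwoSidedIdeal B} {x : B} : x ∈ I.ksub F ↔ x ∈ I := Iff.rfl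

theorem ksub_eq_bot_iff {I : TwoSidedIdeal B} : I.ksub F = ⊥ ↔ I = ⊥ := by
  simp [SetLike.ext_iff]

def ofSubmodule (S : Submodule F B) (hl : ∀ a s, s ∈ S → a * s ∈ S)
    (hr : ∀ a s, s ∈ S → s * a ∈ S) : TwoSidedIdeal B :=
  .mk' S S.zero_mem S.add_mem (fun hx => by simpa using hl (-1) _ hx) (hl _ _) (hr _ _)

@[simp]
theorem mem_ofSubmodule {S : Submodule F B} {hl hr} {x : B} : x ∈ ofSubmodule S hl hr ↔ x ∈ S :=
  mem_mk' _ _ _ _ _ _ x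

@[simp]
theorem ksub_ofSubmodule (S : Submodule F B) (hl hr) : (ofSubmodule S hl hr).ksub F = S :=
  Submodule.ext fun _ => mem_ofSubmodule

end TwoSidedIdeal

section Graded

variable {k A : Type*} [CommSemiring k] [Ring A] [Algebra k A] (𝒜 : ℕ → Submodule k A)
  [GradedAlgebra 𝒜]

theorem GradedAlgebra.proj_of_mem {n d : ℕ} {x : A} (hx : x ∈ 𝒜 n) :
    GradedAlgebra.proj 𝒜 d x = if n = d then x else 0 := by
  split_ifs with h
  · subst h
    rw [GradedAlgebra.proj_apply, DirectSum.decompose_of_mem_same 𝒜 hx]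
  · rw [GradedAlgebra.proj_apply, DirectSum.decompose_of_mem_ne 𝒜 hx h]

theorem isGradedTwoSidedIdeal_of_proj_mem {I : TwoSidedIdeal A}
    (h : ∀ d, ∀ x ∈ I, GradedAlgebra.proj 𝒜 d x ∈ I) : IsGradedTwoSidedIdeal 𝒜 I := by
  classical
  intro x hx
  rw [SetLike.mem_coe, ← DirectSum.sum_support_decompose 𝒜 x]
  exact Submodule.sum_mem _ fun d _ => Submodule.subset_span ⟨h d x hx, d, SetLike.coe_mem _⟩

end Graded

section GradedOverField

variable {k A : Type*} [Field k] [Ring A] [Algebra k A] (𝒜 : ℕ → Submodule k A)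
  [GradedAlgebra 𝒜]

theorem finite_setOf_not_le_of_finiteDimensional_quotient {W : Submodule k A}
    (hW : ∀ d, ∀ x ∈ W, GradedAlgebra.proj 𝒜 d x ∈ W) [FiniteDimensional k (A ⧸ W)] :
    {d | ¬ 𝒜 d ≤ W}.Finite := by
  by_contra hinf
  have := Set.infinite_coe_iff.mpr hinf
  choose v hv hvW using fun d : {d | ¬ 𝒜 d ≤ W} => SetLike.not_le_iff_exists.mp d.2
  refine Module.Finite.not_linearIndependent_of_infinite (R := k) (W.mkQ ∘ v) ?_
  rw [linearIndependent_iff']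
  intro t g hg d hd
  have hsum : ∑ i ∈ t, g i • v i ∈ W := by
    rw [← Submodule.Quotient.mk_eq_zero, ← Submodule.mkQ_apply, map_sum]
    simpa using hg
  have hproj : GradedAlgebra.proj 𝒜 d (∑ i ∈ t, g i • v i) = g d • v d := by
    simp_rw [map_sum, map_smul, GradedAlgebra.proj_of_mem 𝒜 (hv _), Subtype.coe_inj, smul_ite,
      smul_zero, Finset.sum_ite_eq' t d, if_pos hd]
  by_contra hgd
  apply hvW d
  simpa [hproj, smul_smul, inv_mul_cancel₀ hgd] using W.smul_mem (g d)⁻¹ (hW d _ hsum)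

theorem finiteDimensional_of_finite_setOf_ne_bot (hlf : ∀ n, FiniteDimensional k (𝒜 n))
    (h : {d | 𝒜 d ≠ ⊥}.Finite) : FiniteDimensional k A := by
  have htop : h.toFinset.sup 𝒜 = ⊤ := by
    refine eq_top_iff.2 <| (DirectSum.Decomposition.isInternal 𝒜).submodule_iSup_eq_top.ge.trans
      (iSup_le fun d => ?_)
    by_cases hd : 𝒜 d = ⊥
    · simp [hd]
    · exact Finset.le_sup (f := 𝒜) (h.mem_toFinset.2 hd)
  have : FiniteDimensional k (h.toFinset.sup 𝒜 : Submodule k A) :=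
    Submodule.finiteDimensional_finset_sup _ _
  rw [htop] at this
  exact Module.Finite.equiv Submodule.topEquiv

theorem exists_ne_bot_le_of_finiteDimensional_quotient (hlf : ∀ n, FiniteDimensional k (𝒜 n))
    (hinf : ¬ FiniteDimensional k A) {W : Submodule k A}
    (hW : ∀ d, ∀ x ∈ W, GradedAlgebra.proj 𝒜 d x ∈ W) [FiniteDimensional k (A ⧸ W)] :
    ∃ d, 𝒜 d ≠ ⊥ ∧ 𝒜 d ≤ W := by
  by_contra! h
  exact hinf <| finiteDimensional_of_finite_setOf_ne_bot 𝒜 hlf <|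
    (finite_setOf_not_le_of_finiteDimensional_quotient 𝒜 hW).subset h

variable {𝒜}

theorem ProjectivelySimple.finiteDimensional_quotient (hA : ProjectivelySimple k 𝒜)
    {S : Submodule k A} (hl : ∀ a s, s ∈ S → a * s ∈ S) (hr : ∀ a s, s ∈ S → s * a ∈ S)
    (hproj : ∀ d, ∀ s ∈ S, GradedAlgebra.proj 𝒜 d s ∈ S) (hS : S ≠ ⊥) :
    FiniteDimensional k (A ⧸ S) := by
  have h := hA.2 (.ofSubmodule S hl hr)
    (by rwa [Ne, ← TwoSidedIdeal.ksub_eq_bot_iff (F := k), TwoSidedIdeal.ksub_ofSubmodule])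
    (isGradedTwoSidedIdeal_of_proj_mem 𝒜 (by simpa using hproj))
  rwa [TwoSidedIdeal.ksub_ofSubmodule] at h

theorem exists_ne_zero_apply_eq_smul [IsAlgClosed k] {ι : Type*} {C : Submodule k (ι → A)}
    {d : ℕ} [FiniteDimensional k (𝒜 d)] (hd : 𝒜 d ≠ ⊥)
    (hproj : ∀ w ∈ C, (fun i => GradedAlgebra.proj 𝒜 d (w i)) ∈ C) {i : ι}
    (hinj : ∀ w ∈ C, w i = 0 → w = 0) (hle : 𝒜 d ≤ C.map (LinearMap.proj i)) (j : ι) :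
    ∃ w ∈ C, w ≠ 0 ∧ ∃ μ : k, w j = μ • w i := by
  let Cd := C ⊓ Submodule.pi Set.univ fun _ => 𝒜 d
  let π (i : ι) : Cd →ₗ[k] 𝒜 d :=
    (LinearMap.proj i).restrict fun w hw => (Submodule.mem_pi.mp hw.2) i trivial
  have hπ (i : ι) (w : Cd) : (π i w : A) = (w : ι → A) i := rfl
  have hbij : Function.Bijective (π i) := by
    refine ⟨fun w w' h => ?_, fun x => ?_⟩
    · have := hinj _ (C.sub_mem w.2.1 w'.2.1)
        (by simpa [hπ, sub_eq_zero] using congrArg Subtype.val h)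
      exact Subtype.ext (sub_eq_zero.mp this)
    · obtain ⟨w, hw, hwx⟩ := hle x.2
      have hwi : w i = x := hwx
      refine ⟨⟨_, hproj w hw, Submodule.mem_pi.mpr fun _ _ => SetLike.coe_mem _⟩, Subtype.ext ?_⟩
      simp [hπ, hwi]
  let e := LinearEquiv.ofBijective (π i) hbij
  have : Nontrivial (𝒜 d) := Submodule.nontrivial_iff_ne_bot.mpr hd
  obtain ⟨μ, hμ⟩ := Module.End.exists_eigenvalue (π j ∘ₗ e.symm.toLinearMap)
  obtain ⟨v, hv⟩ := hμ.exists_hasEigenvector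
  refine ⟨e.symm v, (e.symm v).2.1, fun h => hv.2 ?_, μ, ?_⟩
  · rw [← e.apply_symm_apply v, Submodule.coe_eq_zero.mp h, map_zero]
  · have hvi : ((e.symm v : Cd) : ι → A) i = v := congrArg Subtype.val (e.apply_symm_apply v)
    rw [hvi]
    simpa [hπ] using congrArg Subtype.val hv.apply_eq_smul

end GradedOverField

section SumTmul

variable {k V M : Type*} [Field k] [AddCommGroup V] [Module k V] [AddCommGroup M] [Module k M]
  {ι : Type*} [Fintype ι]

variable (k) in
def sumTmul (l : ι → V) : (ι → M) →ₗ[k] V ⊗[k] M :=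
  ∑ i, (TensorProduct.mk k V M (l i)).comp (LinearMap.proj i)

@[simp]
theorem sumTmul_apply (l : ι → V) (w : ι → M) : sumTmul k l w = ∑ i, l i ⊗ₜ[k] w i := by
  simp [sumTmul]

theorem comm_sumTmul (l : ι → V) (w : ι → M) :
    TensorProduct.comm k V M (sumTmul k l w) = sumTmul k w l := by
  simp

theorem sumTmul_injective {l : ι → V} (hl : LinearIndependent k l) :
    Function.Injective (sumTmul k l (M := M)) := by
  classical
  intro w w' h
  funext j
  obtain ⟨f, hf⟩ := LinearMap.exists_extend ((Module.Basis.span hl).coord j)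
  have hfl : ∀ i, f (l i) = if i = j then 1 else 0 := fun i => by
    simpa [Module.Basis.span_apply, Finsupp.single_apply] using
      LinearMap.congr_fun hf ⟨l i, Submodule.subset_span ⟨i, rfl⟩⟩
  have hcoord : ∀ w : ι → M, TensorProduct.lid k M (f.rTensor M (sumTmul k l w)) = w j := by
    simp [hfl]
  rw [← hcoord w, ← hcoord w', h]

theorem exists_sumTmul_eq_of_mem_span {n : ℕ} (l : Fin (n + 1) → V) (w : Fin (n + 1) → M)
    {j : Fin (n + 1)} (hj : w j ∈ Submodule.span k (Set.range (w ∘ j.succAbove))) :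
    ∃ l' : Fin n → V, sumTmul k l w = sumTmul k l' (w ∘ j.succAbove) := by
  obtain ⟨c, hc⟩ := (Submodule.mem_span_range_iff_exists_fun k).mp hj
  refine ⟨fun i => l (j.succAbove i) + c i • l j, ?_⟩
  simp only [sumTmul_apply, Fin.sum_univ_succAbove _ j, ← hc, TensorProduct.tmul_sum,
    TensorProduct.add_tmul, Finset.sum_add_distrib, Function.comp_apply,
    TensorProduct.smul_tmul, add_comm]

theorem exists_sumTmul_eq_of_not_linearIndependent {n : ℕ} {l : Fin (n + 1) → V}
    (hl : ¬ LinearIndependent k l) (w : Fin (n + 1) → M) :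
    ∃ (l' : Fin n → V) (w' : Fin n → M), sumTmul k l w = sumTmul k l' w' := by
  obtain ⟨j, hj⟩ := not_forall.mp (mt linearIndependent_iff_notMem_span.mpr hl)
  rw [not_not, ← Set.compl_eq_univ_sdiff, ← Fin.range_succAbove, ← Set.range_comp] at hj
  obtain ⟨w', hw'⟩ := exists_sumTmul_eq_of_mem_span w l hj
  refine ⟨l ∘ j.succAbove, w', ?_⟩
  rw [← comm_sumTmul, hw', comm_sumTmul]

end SumTmul

section FiniteDimensionalBaseChange

variable {k L : Type*} [Field k] [Field L] [Algebra k L] {M : Type*} [AddCommGroup M]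
  [Module k M]

theorem finiteDimensional_of_finiteDimensional_baseChange [FiniteDimensional L (L ⊗[k] M)] :
    FiniteDimensional k M := by
  have h := (Module.rank_lt_aleph0_iff (R := L) (M := L ⊗[k] M)).mpr inferInstance
  rw [Module.rank_baseChange, Cardinal.lift_lt_aleph0] at h
  exact Module.rank_lt_aleph0_iff.mp h

theorem finiteDimensional_quotient_baseChange_iff (S : Submodule k M) :
    FiniteDimensional L ((L ⊗[k] M) ⧸ S.baseChange L) ↔ FiniteDimensional k (M ⧸ S) := by
  have e := TensorProduct.AlgebraTensorModule.tensorQuotientEquiv (R := k) L k L S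
  constructor <;> intro h
  · have := Module.Finite.equiv (R := L) (M := (L ⊗[k] M) ⧸ S.baseChange L) e.symm
    exact finiteDimensional_of_finiteDimensional_baseChange (L := L)
  · exact Module.Finite.equiv e

theorem finiteDimensional_quotient_of_one_tmul_mem (N : Submodule L (L ⊗[k] M))
    {S : Submodule k M} (hS : ∀ s ∈ S, (1 : L) ⊗ₜ[k] s ∈ N) [FiniteDimensional k (M ⧸ S)] :
    FiniteDimensional L ((L ⊗[k] M) ⧸ N) := by
  have hle : S.baseChange L ≤ N := by
    rw [Submodule.baseChange_eq_span, Submodule.span_le]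
    rintro _ ⟨s, hs, rfl⟩
    exact hS s hs
  have := (finiteDimensional_quotient_baseChange_iff (L := L) S).mpr ‹_›
  exact Module.Finite.of_surjective (Submodule.factor hle) (Submodule.factor_surjective hle)

end FiniteDimensionalBaseChange

section IdealBaseChange

variable {k L A : Type*} [CommRing k] [CommRing L] [Algebra k L] [Ring A] [Algebra k A]

theorem Submodule.mul_mem_baseChange_left {S : Submodule k A}
    (hS : ∀ a s, s ∈ S → a * s ∈ S) (x : L ⊗[k] A) {y : L ⊗[k] A}
    (hy : y ∈ S.baseChange L) : x * y ∈ S.baseChange L := by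
  rw [Submodule.baseChange_eq_span] at hy ⊢
  induction hy using Submodule.span_induction with
  | mem _ hy =>
    obtain ⟨s, hs, rfl⟩ := hy
    induction x using TensorProduct.induction_on with
    | zero => simp
    | tmul l a =>
      rw [TensorProduct.mk_apply, Algebra.TensorProduct.tmul_mul_tmul, mul_one,
        ← mul_one l, ← smul_eq_mul, ← TensorProduct.smul_tmul']
      exact Submodule.smul_mem _ l (Submodule.subset_span ⟨a * s, hS a s hs, rfl⟩)
    | add x x' hx hx' => rw [add_mul]; exact Submodule.add_mem _ hx hx'
  | zero => simp
  | add y y' _ _ hy hy' => rw [mul_add]; exact Submodule.add_mem _ hy hy'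
  | smul c y _ hy => rw [mul_smul_comm]; exact Submodule.smul_mem _ c hy

theorem Submodule.mul_mem_baseChange_right {S : Submodule k A}
    (hS : ∀ a s, s ∈ S → s * a ∈ S) (x : L ⊗[k] A) {y : L ⊗[k] A}
    (hy : y ∈ S.baseChange L) : y * x ∈ S.baseChange L := by
  rw [Submodule.baseChange_eq_span] at hy ⊢
  induction hy using Submodule.span_induction with
  | mem _ hy =>
    obtain ⟨s, hs, rfl⟩ := hy
    induction x using TensorProduct.induction_on with
    | zero => simp
    | tmul l a =>
      rw [TensorProduct.mk_apply, Algebra.TensorProduct.tmul_mul_tmul, one_mul,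
        ← mul_one l, ← smul_eq_mul, ← TensorProduct.smul_tmul']
      exact Submodule.smul_mem _ l (Submodule.subset_span ⟨s * a, hS a s hs, rfl⟩)
    | add x x' hx hx' => rw [mul_add]; exact Submodule.add_mem _ hx hx'
  | zero => simp
  | add y y' _ _ hy hy' => rw [add_mul]; exact Submodule.add_mem _ hy hy'
  | smul c y _ hy => rw [smul_mul_assoc]; exact Submodule.smul_mem _ c hy

variable (L) in
def TwoSidedIdeal.baseChange (I : TwoSidedIdeal A) : TwoSidedIdeal (L ⊗[k] A) :=
  .ofSubmodule ((I.ksub k).baseChange L)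
    (fun x _ hy => Submodule.mul_mem_baseChange_left (fun a s hs => I.mul_mem_left a s hs) x hy)
    (fun x _ hy => Submodule.mul_mem_baseChange_right (fun a s hs => I.mul_mem_right s a hs) x hy)

@[simp]
theorem TwoSidedIdeal.ksub_baseChange (I : TwoSidedIdeal A) :
    (I.baseChange L).ksub L = (I.ksub k).baseChange L :=
  TwoSidedIdeal.ksub_ofSubmodule _ _ _

variable (𝒜 : ℕ → Submodule k A)

theorem isGradedTwoSidedIdeal_baseChange {I : TwoSidedIdeal A}
    (hI : IsGradedTwoSidedIdeal 𝒜 I) :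
    IsGradedTwoSidedIdeal (fun n => (𝒜 n).baseChange L) (I.baseChange L) := by
  have hle : I.ksub k ≤ Submodule.span k {x | x ∈ I ∧ ∃ n, x ∈ 𝒜 n} := hI
  intro x hx
  have hx' : x ∈ (I.ksub k).baseChange L := by rw [← TwoSidedIdeal.ksub_baseChange]; exact hx
  refine (Submodule.span_le.mpr ?_) ((Submodule.baseChange_span L _).le
    (Submodule.baseChange_mono L hle hx'))
  rintro _ ⟨t, ⟨htI, n, htn⟩, rfl⟩
  exact Submodule.subset_span ⟨Submodule.tmul_mem_baseChange_of_mem 1 htI,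
    n, Submodule.tmul_mem_baseChange_of_mem 1 htn⟩

variable [GradedAlgebra 𝒜]

theorem baseChange_proj_of_mem_baseChange {n d : ℕ} {y : L ⊗[k] A}
    (hy : y ∈ (𝒜 n).baseChange L) :
    (GradedAlgebra.proj 𝒜 d).baseChange L y = if n = d then y else 0 := by
  obtain ⟨z, rfl⟩ := hy
  rw [← LinearMap.comp_apply, ← LinearMap.baseChange_comp]
  split_ifs with h
  · congr 2
    ext x
    simp [GradedAlgebra.proj_of_mem 𝒜 x.2, h]
  · rw [show GradedAlgebra.proj 𝒜 d ∘ₗ (𝒜 n).subtype = 0 by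
      ext x; simp [GradedAlgebra.proj_of_mem 𝒜 x.2, h]]
    simp

theorem baseChange_proj_mem_of_isGraded {J : TwoSidedIdeal (L ⊗[k] A)}
    (hJ : IsGradedTwoSidedIdeal (fun n => (𝒜 n).baseChange L) J) (d : ℕ) {x : L ⊗[k] A}
    (hx : x ∈ J) : (GradedAlgebra.proj 𝒜 d).baseChange L x ∈ J := by
  suffices h : Submodule.span L {x | x ∈ J ∧ ∃ n, x ∈ (𝒜 n).baseChange L} ≤
      (J.ksub L).comap ((GradedAlgebra.proj 𝒜 d).baseChange L) from h (hJ hx)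
  refine Submodule.span_le.mpr ?_
  rintro y ⟨hyJ, n, hyn⟩
  rw [SetLike.mem_coe, Submodule.mem_comap, baseChange_proj_of_mem_baseChange 𝒜 hyn]
  split_ifs
  · exact hyJ
  · exact J.zero_mem

end IdealBaseChange

section CoeffSubmodule

variable {k L A : Type*} [Field k] [Field L] [Algebra k L] [Ring A] [Algebra k A]
  {ι : Type*} [Fintype ι]

variable (k) in
def coeffSubmodule (J : TwoSidedIdeal (L ⊗[k] A)) (l : ι → L) : Submodule k (ι → A) :=
  ((J.ksub L).restrictScalars k).comap (sumTmul k l)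

variable {J : TwoSidedIdeal (L ⊗[k] A)} {l : ι → L} {w : ι → A}

theorem mem_coeffSubmodule : w ∈ coeffSubmodule k J l ↔ sumTmul k l w ∈ J := Iff.rfl

theorem mul_left_mem_coeffSubmodule (a : A) (hw : w ∈ coeffSubmodule k J l) :
    (fun i => a * w i) ∈ coeffSubmodule k J l := by
  have h : sumTmul k l (fun i => a * w i) = (1 ⊗ₜ a) * sumTmul k l w := by
    simp [Finset.mul_sum, Algebra.TensorProduct.tmul_mul_tmul]
  rw [mem_coeffSubmodule, h]
  exact J.mul_mem_left _ _ hw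

theorem mul_right_mem_coeffSubmodule (a : A) (hw : w ∈ coeffSubmodule k J l) :
    (fun i => w i * a) ∈ coeffSubmodule k J l := by
  have h : sumTmul k l (fun i => w i * a) = sumTmul k l w * (1 ⊗ₜ a) := by
    simp [Finset.sum_mul, Algebra.TensorProduct.tmul_mul_tmul]
  rw [mem_coeffSubmodule, h]
  exact J.mul_mem_right _ _ hw

theorem proj_mem_coeffSubmodule (𝒜 : ℕ → Submodule k A) [GradedAlgebra 𝒜] {d : ℕ}
    (hJ : ∀ x ∈ J, (GradedAlgebra.proj 𝒜 d).baseChange L x ∈ J)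
    (hw : w ∈ coeffSubmodule k J l) :
    (fun i => GradedAlgebra.proj 𝒜 d (w i)) ∈ coeffSubmodule k J l := by
  have h : sumTmul k l (fun i => GradedAlgebra.proj 𝒜 d (w i)) =
      (GradedAlgebra.proj 𝒜 d).baseChange L (sumTmul k l w) := by
    simp
  rw [mem_coeffSubmodule, h]
  exact hJ _ hw

end CoeffSubmodule

namespace ProjectivelySimple

variable {k L A : Type*} [Field k] [Field L] [Algebra k L] [Ring A] [Algebra k A]
  {𝒜 : ℕ → Submodule k A}

section Ascent

variable [GradedAlgebra 𝒜] [IsAlgClosed k] {J : TwoSidedIdeal (L ⊗[k] A)}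

theorem sumTmul_eq_zero_of_mem (hlf : ∀ n, FiniteDimensional k (𝒜 n))
    (hA : ProjectivelySimple k 𝒜)
    (hJ : ∀ d, ∀ x ∈ J, (GradedAlgebra.proj 𝒜 d).baseChange L x ∈ J) {n : ℕ}
    (hshort : ∀ (l : Fin (n + 1) → L) (w : Fin (n + 1) → A), sumTmul k l w ∈ J →
      sumTmul k l w = 0)
    {l : Fin (n + 2) → L} (hl : LinearIndependent k l) {w : Fin (n + 2) → A}
    (hw : sumTmul k l w ∈ J) : sumTmul k l w = 0 := by
  set C := coeffSubmodule k J l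
  have hdrop : ∀ w ∈ C, ∀ j, w j ∈ Submodule.span k (Set.range (w ∘ j.succAbove)) →
      sumTmul k l w = 0 := by
    intro w hw j hj
    obtain ⟨l', hl'⟩ := exists_sumTmul_eq_of_mem_span l w hj
    rw [mem_coeffSubmodule, hl'] at hw
    rw [hl']
    exact hshort _ _ hw
  have hinj : ∀ w ∈ C, w 0 = 0 → w = 0 := fun w hw h0 =>
    sumTmul_injective hl (by rw [hdrop w hw 0 (by rw [h0]; exact zero_mem _), map_zero])
  by_contra hne
  have hproj : ∀ d, ∀ x ∈ C.map (LinearMap.proj 0),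
      GradedAlgebra.proj 𝒜 d x ∈ C.map (LinearMap.proj 0) := by
    rintro d _ ⟨w, hw, rfl⟩
    exact ⟨_, proj_mem_coeffSubmodule 𝒜 (hJ d) hw, rfl⟩
  have hS : C.map (LinearMap.proj 0) ≠ ⊥ := by
    refine (Submodule.ne_bot_iff _).mpr ⟨w 0, ⟨w, hw, rfl⟩, fun h => hne ?_⟩
    rw [hinj w hw h, map_zero]
  have := hA.finiteDimensional_quotient
    (by rintro a _ ⟨w, hw, rfl⟩; exact ⟨_, mul_left_mem_coeffSubmodule a hw, rfl⟩)
    (by rintro a _ ⟨w, hw, rfl⟩; exact ⟨_, mul_right_mem_coeffSubmodule a hw, rfl⟩) hproj hS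
  obtain ⟨d, hd, hle⟩ := exists_ne_bot_le_of_finiteDimensional_quotient 𝒜 hlf hA.1 hproj
  have := hlf d
  obtain ⟨v, hv, hv0, μ, hμ⟩ := exists_ne_zero_apply_eq_smul hd
    (fun w hw => proj_mem_coeffSubmodule 𝒜 (hJ d) hw) hinj hle 1
  have hv1 : v 1 ∈ Submodule.span k (Set.range (v ∘ Fin.succAbove 1)) := by
    rw [hμ]
    exact Submodule.smul_mem _ μ (Submodule.subset_span ⟨0, rfl⟩)
  exact hv0 (sumTmul_injective hl (by rw [hdrop v hv 1 hv1, map_zero]))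

theorem exists_ne_zero_one_tmul_mem (hlf : ∀ n, FiniteDimensional k (𝒜 n))
    (hA : ProjectivelySimple k 𝒜)
    (hJ : ∀ d, ∀ x ∈ J, (GradedAlgebra.proj 𝒜 d).baseChange L x ∈ J) (hJ0 : J ≠ ⊥) :
    ∃ a : A, a ≠ 0 ∧ (1 : L) ⊗ₜ[k] a ∈ J := by
  by_contra! hpure
  have key : ∀ m (l : Fin m → L) (w : Fin m → A), sumTmul k l w ∈ J → sumTmul k l w = 0 := by
    intro m
    induction m with
    | zero => simp
    | succ m ih =>
      cases m with
      | zero =>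
        intro l w hw
        rw [sumTmul_apply, Fin.sum_univ_one] at hw ⊢
        by_contra h0
        have hl : l 0 ≠ 0 := fun h => h0 (by rw [h, TensorProduct.zero_tmul])
        refine hpure (w 0) (fun h => h0 (by rw [h, TensorProduct.tmul_zero])) ?_
        simpa [TensorProduct.smul_tmul', inv_mul_cancel₀ hl] using
          (J.ksub L).smul_mem (l 0)⁻¹ hw
      | succ n =>
        intro l w hw
        by_cases hl : LinearIndependent k l
        · exact sumTmul_eq_zero_of_mem hlf hA hJ ih hl hw
        · obtain ⟨l', w', h⟩ := exists_sumTmul_eq_of_not_linearIndependent hl w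
          rw [h] at hw ⊢
          exact ih l' w' hw
  obtain ⟨x, hxJ, hx0⟩ := Submodule.exists_mem_ne_zero_of_ne_bot
    (mt (TwoSidedIdeal.ksub_eq_bot_iff (F := L)).mp hJ0)
  obtain ⟨m, l, w, rfl⟩ := TensorProduct.exists_sum_tmul_eq x
  exact hx0 (by simpa using key m l w (by simpa using hxJ))

end Ascent

theorem baseChange [GradedAlgebra 𝒜] [IsAlgClosed k] (hlf : ∀ n, FiniteDimensional k (𝒜 n))
    (hA : ProjectivelySimple k 𝒜) : ProjectivelySimple L (fun n => (𝒜 n).baseChange L) := by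
  refine ⟨fun _ => hA.1 (finiteDimensional_of_finiteDimensional_baseChange (L := L)),
    fun J hJ0 hJgr => ?_⟩
  have hJ d x (hx : x ∈ J) := baseChange_proj_mem_of_isGraded 𝒜 hJgr d hx
  obtain ⟨a, ha, haJ⟩ := exists_ne_zero_one_tmul_mem hlf hA hJ hJ0
  let I := J.comap (Algebra.TensorProduct.includeRight : A →ₐ[k] L ⊗[k] A)
  have haI : a ∈ I := (TwoSidedIdeal.mem_comap _).mpr haJ
  have hI : I ≠ ⊥ := fun h => ha (by rwa [h, TwoSidedIdeal.mem_bot] at haI)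
  have hIgr : IsGradedTwoSidedIdeal 𝒜 I := isGradedTwoSidedIdeal_of_proj_mem 𝒜 fun d x hx => by
    simpa [I, TwoSidedIdeal.mem_comap] using hJ d _ ((TwoSidedIdeal.mem_comap _).mp hx)
  have := hA.2 I hI hIgr
  exact finiteDimensional_quotient_of_one_tmul_mem (J.ksub L) (S := I.ksub k)
    fun s hs => (TwoSidedIdeal.mem_comap Algebra.TensorProduct.includeRight).mp hs

theorem of_baseChange (hAL : ProjectivelySimple L (fun n => (𝒜 n).baseChange L)) :
    ProjectivelySimple k 𝒜 := by
  refine ⟨fun _ => hAL.1 inferInstance, fun I hI0 hIgr => ?_⟩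
  have hI : (I.baseChange L : TwoSidedIdeal (L ⊗[k] A)) ≠ ⊥ := by
    rwa [Ne, ← TwoSidedIdeal.ksub_eq_bot_iff (F := L), TwoSidedIdeal.ksub_baseChange,
      ← Submodule.baseChange_bot, Submodule.baseChange_inj, TwoSidedIdeal.ksub_eq_bot_iff]
  have := hAL.2 _ hI (isGradedTwoSidedIdeal_baseChange 𝒜 hIgr)
  rwa [TwoSidedIdeal.ksub_baseChange, finiteDimensional_quotient_baseChange_iff] at this

end ProjectivelySimple

theorem projectively_simple_base_change
    (k L : Type*) [Field k] [IsAlgClosed k] [Field L] [Algebra k L]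
    {A : Type*} [Ring A] [Algebra k A]
    (𝒜 : ℕ → Submodule k A) [GradedAlgebra 𝒜]
    (hlf : ∀ n, FiniteDimensional k (𝒜 n)) :
    ProjectivelySimple k 𝒜 ↔
      ProjectivelySimple L (fun n => (𝒜 n).baseChange L (M := A) (R := k)) :=
  ⟨ProjectivelySimple.baseChange hlf, ProjectivelySimple.of_baseChange⟩
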